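/- The normalized Laplacian Estrada index of the disjoint union of c-r copies of K_s (s ≥ 2) and r isolated vertices equals c e^{-1} + (N-c) e^{(c-r)/(N-c)}, where N = (c-r)s + r. -/

import Mathlib

/-!
The normalized Laplacian of `unionKs k r s` is `α • P` with `α = s / (s - 1)` and
`P = diag(I_k ⊗ (I - J/s), 0)`, where `I - J/s` is the projection of `ℝ^s` onto the vectors with
coordinate sum zero. Since `P` is idempotent, every eigenvalue lies in `{0, α}`; the trace gives
`α` the multiplicity `tr P = k (s - 1) = N - c`, and `0` the remaining `c`. Finally
`α - 1 = 1 / (s - 1) = (c - r) / (N - c)`.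
-/

open Matrix BigOperators
open scoped Classical

noncomputable def normLap {V : Type*} [Fintype V] (G : SimpleGraph V) : Matrix V V ℝ :=
  letI : DecidableRel G.Adj := Classical.decRel _
  let Dh : Matrix V V ℝ := Matrix.diagonal (fun v => (Real.sqrt (G.degree v))⁻¹)
  Dh * (Matrix.diagonal (fun v => ((G.degree v : ℝ))) - G.adjMatrix ℝ) * Dh

noncomputable def NEE {V : Type*} [Fintype V] [DecidableEq V] (G : SimpleGraph V)
    (hL : (normLap G).IsHermitian) : ℝ :=
  ∑ i, Real.exp (hL.eigenvalues i - 1)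

/-- Disjoint union of k copies of the complete graph K_s together with r
isolated vertices. -/
def unionKs (k r s : ℕ) : SimpleGraph (Fin k × Fin s ⊕ Fin r) :=
  SimpleGraph.fromRel (fun x y => ∃ i a b, x = Sum.inl (i, a) ∧ y = Sum.inl (i, b))

open Kronecker

namespace Matrix

variable {n : Type*} [Fintype n] [DecidableEq n]

theorem IsHermitian.sum_comp_eigenvalues_of_eq_smul_of_isIdempotentElem {A P : Matrix n n ℝ}
    (hA : A.IsHermitian) (hP : IsIdempotentElem P) {α : ℝ} (hα : α ≠ 0) (hAP : A = α • P)
    (f : ℝ → ℝ) :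
    ∑ i, f (hA.eigenvalues i) = P.trace * f α + (Fintype.card n - P.trace) * f 0 := by
  -- every eigenvalue lies in `α • σ(P) ⊆ {0, α}`, where `f` agrees with its linear interpolation
  have hf : ∀ i, f (hA.eigenvalues i) =
      hA.eigenvalues i / α * f α + (1 - hA.eigenvalues i / α) * f 0 := by
    intro i
    have hmem : hA.eigenvalues i / α ∈ spectrum ℝ P := by
      rw [← spectrum.smul_mem_smul_iff (r := Units.mk0 α hα)]
      simpa [Units.smul_def, mul_div_cancel₀ _ hα, ← hAP] using hA.eigenvalues_mem_spectrum_real i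
    rcases hP.spectrum_subset ℝ hmem with h | h
    · rw [div_eq_zero_iff, or_iff_left hα] at h
      simp [h]
    · rw [Set.mem_singleton_iff, div_eq_one_iff_eq hα] at h
      simp [h, div_self hα]
  have htrace : ∑ i, hA.eigenvalues i = α * P.trace := by
    simpa [hAP] using hA.trace_eq_sum_eigenvalues.symm
  simp only [hf, Finset.sum_add_distrib, ← Finset.sum_mul, Finset.sum_sub_distrib,
    ← Finset.sum_div, htrace, mul_div_cancel_left₀ _ hα, Finset.sum_const, Finset.card_univ,
    nsmul_eq_mul, mul_one]

variable {l m o : Type*} [Fintype l] [Fintype m] [Fintype o]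

noncomputable def centering (m : Type*) [Fintype m] [DecidableEq m] : Matrix m m ℝ :=
  1 - (Fintype.card m : ℝ)⁻¹ • of fun _ _ => 1

section centering

variable [DecidableEq m] [Nonempty m]

theorem isIdempotentElem_centering : IsIdempotentElem (centering m) := by
  have hJ : (of fun _ _ => (1 : ℝ) : Matrix m m ℝ) * of (fun _ _ => 1) =
      (Fintype.card m : ℝ) • of fun _ _ => 1 := by
    ext; simp [mul_apply]
  have hcard : (Fintype.card m : ℝ) ≠ 0 := by positivity
  unfold IsIdempotentElem centering
  simp only [sub_mul, mul_sub, one_mul, mul_one, smul_mul_smul_comm, hJ, smul_smul, mul_assoc,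
    inv_mul_cancel₀ hcard]
  abel

theorem trace_centering : (centering m).trace = Fintype.card m - 1 := by
  have hcard : (Fintype.card m : ℝ) ≠ 0 := by positivity
  simp [centering, trace, hcard]

end centering

theorem _root_.IsIdempotentElem.one_kronecker [DecidableEq l] {R : Type*} [CommSemiring R]
    {P : Matrix m m R} (hP : IsIdempotentElem P) :
    IsIdempotentElem ((1 : Matrix l l R) ⊗ₖ P) := by
  rw [IsIdempotentElem, ← mul_kronecker_mul, one_mul, hP.eq]

theorem _root_.IsIdempotentElem.fromBlocks_zero {R : Type*} [Semiring R] {P : Matrix m m R}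
    (hP : IsIdempotentElem P) : IsIdempotentElem (fromBlocks P 0 0 (0 : Matrix o o R)) := by
  simp [IsIdempotentElem, fromBlocks_multiply, hP.eq]

theorem trace_fromBlocks_zero {R : Type*} [AddCommMonoid R] (P : Matrix m m R) :
    (fromBlocks P 0 0 (0 : Matrix o o R)).trace = P.trace := by
  simp [trace, Fintype.sum_sum_type]

end Matrix

theorem normLap_apply {V : Type*} [Fintype V] (G : SimpleGraph V) (x y : V) :
    normLap G x y = (√(G.degree x))⁻¹ *
      ((if x = y then (G.degree x : ℝ) else 0) - (if G.Adj x y then 1 else 0)) *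
        (√(G.degree y))⁻¹ := by
  simp [normLap, mul_diagonal, diagonal_mul, Matrix.sub_apply, diagonal_apply,
    SimpleGraph.adjMatrix_apply]

section unionKs

variable {k r s : ℕ}

theorem unionKs_adj_inl_inl {i j : Fin k} {a b : Fin s} :
    (unionKs k r s).Adj (.inl (i, a)) (.inl (j, b)) ↔ i = j ∧ a ≠ b := by
  simp only [unionKs, SimpleGraph.fromRel_adj, Sum.inl.injEq, Prod.mk.injEq]
  grind

theorem unionKs_not_adj_inr (x : Fin k × Fin s ⊕ Fin r) (t : Fin r) :
    ¬ (unionKs k r s).Adj x (.inr t) := by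
  simp [unionKs]

theorem unionKs_degree_inl (i : Fin k) (a : Fin s) :
    (unionKs k r s).degree (.inl (i, a)) = s - 1 := by
  have : (unionKs k r s).neighborFinset (.inl (i, a)) =
      (Finset.univ.erase a).image fun b => .inl (i, b) := by
    ext (⟨j, b⟩ | t)
    · simp [unionKs_adj_inl_inl, eq_comm, and_comm]
    · simp [unionKs_not_adj_inr]
  rw [← SimpleGraph.card_neighborFinset_eq_degree, this,
    Finset.card_image_of_injective _ fun _ _ h => by simpa using h]
  simp

theorem unionKs_degree_inr (t : Fin r) : (unionKs k r s).degree (.inr t) = 0 := by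
  simpa [← SimpleGraph.card_neighborFinset_eq_degree, Finset.eq_empty_iff_forall_notMem]
    using fun x h => unionKs_not_adj_inr x t h.symm

theorem normLap_unionKs (hs : 2 ≤ s) :
    normLap (unionKs k r s) =
      ((s : ℝ) / (s - 1)) • fromBlocks (1 ⊗ₖ centering (Fin s)) 0 0 (0 : Matrix (Fin r) _ ℝ) := by
  have hs' : (2 : ℝ) ≤ s := by exact_mod_cast hs
  have hsqrt : √((s : ℝ) - 1) ^ 2 = s - 1 := Real.sq_sqrt (by linarith)
  have hs1 : (s : ℝ) - 1 ≠ 0 := by linarith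
  ext (⟨i, a⟩ | t) (⟨j, b⟩ | u)
  · simp [normLap_apply, unionKs_degree_inl, unionKs_adj_inl_inl, centering, one_apply,
      Nat.cast_sub (by omega : 1 ≤ s)]
    rcases eq_or_ne i j with rfl | hij <;> rcases eq_or_ne a b with rfl | hab <;>
      simp [*] <;> field_simp <;> simp [hsqrt, hs1]
  · simp [normLap_apply, unionKs_not_adj_inr]
  · simp [normLap_apply, unionKs_degree_inr]
  · simp [normLap_apply, unionKs_degree_inr]

end unionKs

/-- NEE of the disjoint union of c-r copies of K_s and r isolated vertices
equals c e^{-1} + (N-c)e^{(c-r)/(N-c)} with N = (c-r)s + r. -/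
theorem unionKs_NEE (c r s N : ℕ) (hrc : r < c) (hs : 2 ≤ s)
    (hN : N = (c - r) * s + r)
    (hL : (normLap (unionKs (c - r) r s)).IsHermitian) :
    NEE (unionKs (c - r) r s) hL =
      (c : ℝ) * Real.exp (-1) +
        ((N : ℝ) - c) * Real.exp (((c : ℝ) - r) / ((N : ℝ) - c)) := by
  have : NeZero s := ⟨by omega⟩
  have hs1 : (s : ℝ) - 1 ≠ 0 := sub_ne_zero.2 (by exact_mod_cast (by omega : s ≠ 1))
  have hcr : (c : ℝ) - r ≠ 0 := sub_ne_zero.2 (by exact_mod_cast hrc.ne')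
  have hP : IsIdempotentElem (fromBlocks ((1 : Matrix (Fin (c - r)) _ ℝ) ⊗ₖ centering (Fin s))
      0 0 (0 : Matrix (Fin r) _ ℝ)) :=
    isIdempotentElem_centering.one_kronecker.fromBlocks_zero
  rw [NEE, hL.sum_comp_eigenvalues_of_eq_smul_of_isIdempotentElem hP
    (div_ne_zero (NeZero.ne _) hs1) (normLap_unionKs hs) fun x => Real.exp (x - 1),
    trace_fromBlocks_zero, trace_kronecker, trace_centering, trace_one]
  have hexp : ((c : ℝ) - r) / ((c - r) * s + r - c) = s / (s - 1) - 1 := by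
    rw [show ((c : ℝ) - r) * s + r - c = (c - r) * (s - 1) by ring, div_mul_cancel_left₀ hcr]
    field_simp
    ring
  simp only [Fintype.card_sum, Fintype.card_prod, Fintype.card_fin, hN]
  push_cast [hrc.le]
  rw [hexp, zero_sub]
  ring
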